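/- Let α > −1 be real, N ≥ 1, c > 0, let (v_n)_{n≥1} be a strictly increasing sequence of positive reals, and let (u_n)_{n≥1} be real numbers such that for every integer k ≥ 0, every 0 ≤ i ≤ N−1, the series Σ_{n=1}^∞ v_n^k · |u_n| · |J_α^{(i)}(c v_n)| and Σ_{n=1}^∞ v_n^k · |u_n| · |J_{α+i}(c v_n)| converge. Then det_{1≤i,j≤N}[ Σ_{n=1}^∞ (−1)^{i−1} · v_n^{i+2j+α−3} · J_α^{(i−1)}(c v_n) · u_n ] = det_{1≤i,j≤N}[ Σ_{n=1}^∞ v_n^{i+2j+α−3} · J_{α+i−1}(c v_n) · u_n ]. -/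

import Mathlib

/-!
Differentiating the series termwise gives `J_μ'(x) = (μ / x) J_μ(x) - J_{μ+1}(x)`, and then by
induction `J_α^{(i)}(y) = ∑_{m ≤ i} b_{i,m} y^{m-i} J_{α+m}(y)` with `b_{i,m} = besselCoeff α i m`
and `b_{i,i} = (-1)^i`. Putting `y = c v_n`, row `i` of the left matrix is the combination of rows
`m ≤ i` of the right matrix with coefficients `(-1)^i b_{i,m} c^{m-i}`, so the left matrix is a
lower unitriangular matrix times the right one. Since `v_n ≥ v_0 > 0`, a real power `v_n^r` with
`r ≥ -1` is at most `v_n^⌈r⌉ + v_0⁻¹`; hence the moment hypotheses make every series absolutely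
convergent, and the sums over `n` commute with the finite sums over `m`.
-/

/-- The Bessel function of the first kind, for `x > 0`,
`J_α(x) = Σ_{k=0}^∞ (-1)^k (x/2)^{2k+α} / (k! Γ(k+α+1))`. -/
noncomputable def besselJ (α x : ℝ) : ℝ :=
  ∑' k : ℕ, (-1 : ℝ) ^ k * (x / 2) ^ (2 * (k : ℝ) + α) /
    ((Nat.factorial k : ℝ) * Real.Gamma ((k : ℝ) + α + 1))

open Real Nat Finset

lemma Real.min_Gamma_le_Gamma_nat_add {μ : ℝ} (hμ : -1 < μ) (k : ℕ) :
    min (Gamma (μ + 1)) (Gamma (μ + 2)) ≤ Gamma (k + μ + 1) := by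
  induction k using Nat.twoStepInduction with
  | zero => simp
  | one => simp only [cast_one]; rw [show 1 + μ + 1 = μ + 2 by ring]; exact min_le_right _ _
  | more k _ ih =>
    have hk : (1 : ℝ) ≤ (k + 1 : ℕ) + μ + 1 := by
      push_cast; linarith [k.cast_nonneg (α := ℝ)]
    calc min (Gamma (μ + 1)) (Gamma (μ + 2)) ≤ Gamma ((k + 1 : ℕ) + μ + 1) := ih
      _ ≤ ((k + 1 : ℕ) + μ + 1) * Gamma ((k + 1 : ℕ) + μ + 1) :=
        le_mul_of_one_le_left (Gamma_pos_of_pos (by linarith)).le hk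
      _ = Gamma ((k + 2 : ℕ) + μ + 1) := by
        rw [← Gamma_add_one (by linarith)]; push_cast; ring_nf

lemma Real.Gamma_nat_add_pos {μ : ℝ} (hμ : -1 < μ) (k : ℕ) : 0 < Gamma (k + μ + 1) :=
  Gamma_pos_of_pos (by linarith [k.cast_nonneg (α := ℝ)])

lemma Real.rpow_le_rpow_add_rpow {a b y : ℝ} (ha : 0 < a) (hay : a ≤ y) (hyb : y ≤ b)
    (s : ℝ) :
    y ^ s ≤ a ^ s + b ^ s := by
  rcases le_total 0 s with hs | hs
  · linarith [rpow_le_rpow (ha.le.trans hay) hyb hs, rpow_nonneg ha.le s]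
  · linarith [rpow_le_rpow_of_nonpos ha hay hs, rpow_nonneg (ha.le.trans (hay.trans hyb)) s]

lemma Real.rpow_le_pow_ceil_add_inv {a x r : ℝ} (ha : 0 < a) (hax : a ≤ x) (hr : -1 ≤ r) :
    x ^ r ≤ x ^ ⌈r⌉₊ + a⁻¹ := by
  have hx : 0 < x := ha.trans_le hax
  rcases le_or_gt 1 x with h1 | h1
  · have := rpow_le_rpow_of_exponent_le h1 (Nat.le_ceil r)
    rw [rpow_natCast] at this
    linarith [inv_pos.2 ha]
  · have := rpow_le_rpow_of_exponent_ge hx h1.le hr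
    rw [rpow_neg_one] at this
    linarith [inv_anti₀ ha hax, pow_nonneg hx.le ⌈r⌉₊]

lemma summable_rpow_mul_of_summable_pow_mul {v f : ℕ → ℝ} {a r : ℝ} (ha : 0 < a)
    (hv : ∀ n, a ≤ v n) (hr : -1 ≤ r) (hf : ∀ k : ℕ, Summable fun n => v n ^ k * |f n|) :
    Summable fun n => v n ^ r * f n :=
  .of_norm_bounded ((hf ⌈r⌉₊).add ((hf 0).mul_left a⁻¹)) fun n => by
    rw [norm_mul, norm_eq_abs, norm_eq_abs, abs_of_pos (rpow_pos_of_pos (ha.trans_le (hv n)) r),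
      pow_zero, one_mul, ← add_mul]
    exact mul_le_mul_of_nonneg_right (rpow_le_pow_ceil_add_inv ha (hv n) hr) (abs_nonneg _)

lemma summable_succ_mul_pow_div_factorial_mul_Gamma {μ : ℝ} (hμ : -1 < μ) {q : ℝ}
    (hq : 0 ≤ q) :
    Summable fun k : ℕ => (k + 1) * q ^ k / (k ! * Gamma (k + μ + 1)) := by
  set G := min (Gamma (μ + 1)) (Gamma (μ + 2))
  have hG : 0 < G := lt_min (Gamma_pos_of_pos (by linarith)) (Gamma_pos_of_pos (by linarith))
  refine .of_nonneg_of_le (fun k => by have := Gamma_nat_add_pos hμ k; positivity)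
    (fun k => ?_) ((summable_pow_div_factorial (2 * q)).mul_left G⁻¹)
  have h2k : (k + 1 : ℝ) ≤ 2 ^ k := by exact_mod_cast Nat.lt_two_pow_self
  calc (k + 1) * q ^ k / (k ! * Gamma (k + μ + 1)) ≤ 2 ^ k * q ^ k / (k ! * G) := by
        gcongr; exact min_Gamma_le_Gamma_nat_add hμ k
    _ = G⁻¹ * ((2 * q) ^ k / k !) := by rw [mul_pow]; field_simp

theorem Matrix.det_of_eq_sum_range_mul {R : Type*} [CommRing R] {N : ℕ}
    {A B L : ℕ → ℕ → R} (hL : ∀ i, L i i = 1)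
    (hA : ∀ i < N, ∀ j < N, A i j = ∑ m ∈ range (i + 1), L i m * B m j) :
    (Matrix.of fun i j : Fin N => A i j).det = (Matrix.of fun i j : Fin N => B i j).det := by
  let T : Matrix (Fin N) (Fin N) R := Matrix.of fun i m => if m ≤ i then L i m else 0
  have hT : (Matrix.of fun i j : Fin N => A i j) = T * Matrix.of fun i j : Fin N => B i j := by
    ext i j
    have hrange : (range N).filter (· ≤ (i : ℕ)) = range (i + 1) := by
      ext m; simp only [mem_filter, mem_range]; omega
    simp only [Matrix.of_apply, Matrix.mul_apply, T, ite_mul, zero_mul, Fin.le_def]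
    rw [Fin.sum_univ_eq_sum_range (fun m => if m ≤ (i : ℕ) then L i m * B m j else 0),
      ← sum_filter, hrange, hA i i.2 j j.2]
  have hTdet : T.det = 1 := by
    rw [Matrix.det_of_isLowerTriangular T fun i m h => if_neg (not_le.2 h)]
    simp [T, hL]
  rw [hT, Matrix.det_mul, hTdet, one_mul]

noncomputable def besselJTerm (μ : ℝ) (k : ℕ) (x : ℝ) : ℝ :=
  (-1 : ℝ) ^ k * (x / 2) ^ (2 * (k : ℝ) + μ) / (k ! * Gamma (k + μ + 1))

lemma besselJ_eq_tsum (μ x : ℝ) : besselJ μ x = ∑' k, besselJTerm μ k x := rfl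

lemma abs_besselJTerm {μ x : ℝ} (hμ : -1 < μ) (hx : 0 < x) (k : ℕ) :
    |besselJTerm μ k x| = (x / 2) ^ μ * ((x / 2) ^ 2) ^ k / (k ! * Gamma (k + μ + 1)) := by
  have := Gamma_nat_add_pos hμ k
  rw [besselJTerm, abs_div, abs_mul, abs_pow, abs_neg, abs_one, one_pow, one_mul,
    abs_of_nonneg (rpow_nonneg (by positivity) _), abs_of_pos (by positivity), ← pow_mul,
    add_comm, rpow_add (by positivity), ← Nat.cast_ofNat, ← Nat.cast_mul, rpow_natCast]

lemma summable_besselJTerm {μ x : ℝ} (hμ : -1 < μ) (hx : 0 < x) :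
    Summable fun k => besselJTerm μ k x := by
  refine .of_norm_bounded ((summable_succ_mul_pow_div_factorial_mul_Gamma hμ
    (sq_nonneg (x / 2))).mul_left ((x / 2) ^ μ)) fun k => ?_
  have := Gamma_nat_add_pos hμ k
  rw [norm_eq_abs, abs_besselJTerm hμ hx, mul_div_assoc, mul_div_assoc]
  gcongr
  exact le_mul_of_one_le_left (by positivity) (by linarith [k.cast_nonneg (α := ℝ)])

lemma hasDerivAt_besselJTerm (μ : ℝ) (k : ℕ) {y : ℝ} (hy : 0 < y) :
    HasDerivAt (besselJTerm μ k) ((2 * k + μ) / y * besselJTerm μ k y) y := by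
  have h := ((hasDerivAt_rpow_const (p := 2 * (k : ℝ) + μ) (Or.inl (half_pos hy).ne')).comp y
    ((hasDerivAt_id y).div_const 2)).const_mul ((-1 : ℝ) ^ k) |>.div_const
      (k ! * Gamma (k + μ + 1))
  refine h.congr_deriv ?_
  rw [besselJTerm, rpow_sub (half_pos hy), rpow_one]
  field_simp

lemma besselJTerm_succ {μ : ℝ} (hμ : -1 < μ) (k : ℕ) {x : ℝ} (hx : 0 < x) :
    2 * (k + 1 : ℕ) / x * besselJTerm μ (k + 1) x = -besselJTerm (μ + 1) k x := by
  have hexp : 2 * ((k + 1 : ℕ) : ℝ) + μ = 2 * k + (μ + 1) + 1 := by push_cast; ring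
  have hGamma : Gamma ((k + 1 : ℕ) + μ + 1) = Gamma (k + (μ + 1) + 1) := by
    push_cast; ring_nf
  rw [besselJTerm, besselJTerm, hexp, hGamma, rpow_add (half_pos hx), rpow_one, factorial_succ]
  have := Gamma_nat_add_pos (show -1 < μ + 1 by linarith) k
  push_cast
  field_simp
  ring

lemma norm_deriv_besselJTerm_le {μ x y : ℝ} (hμ : -1 < μ) (hx : 0 < x)
    (hy : y ∈ Set.Ioo (x / 2) (2 * x)) (k : ℕ) :
    ‖(2 * k + μ) / y * besselJTerm μ k y‖ ≤ (2 / x * (|μ| + 2) * ((x / 4) ^ μ + x ^ μ)) *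
      ((k + 1) * (x ^ 2) ^ k / (k ! * Gamma (k + μ + 1))) := by
  obtain ⟨hxy, hyx⟩ := hy
  have hy0 : 0 < y := by linarith
  have := Gamma_nat_add_pos hμ k
  have hcoeff : |2 * (k : ℝ) + μ| ≤ (|μ| + 2) * (k + 1) := by
    have := abs_add_le (2 * (k : ℝ)) μ
    rw [abs_of_nonneg (by positivity : (0 : ℝ) ≤ 2 * k)] at this
    nlinarith [abs_nonneg μ, k.cast_nonneg (α := ℝ)]
  calc ‖(2 * k + μ) / y * besselJTerm μ k y‖
      = |2 * (k : ℝ) + μ| / y *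
          ((y / 2) ^ μ * ((y / 2) ^ 2) ^ k / (k ! * Gamma (k + μ + 1))) := by
        rw [norm_mul, norm_div, norm_eq_abs, norm_eq_abs, norm_eq_abs, abs_of_pos hy0,
          abs_besselJTerm hμ hy0]
    _ ≤ (|μ| + 2) * (k + 1) / (x / 2) *
        (((x / 4) ^ μ + x ^ μ) * (x ^ 2) ^ k / (k ! * Gamma (k + μ + 1))) := by
        gcongr
        · exact rpow_le_rpow_add_rpow (by positivity) (by linarith) (by linarith) μ
        · linarith
    _ = _ := by field_simp

lemma hasDerivAt_besselJ {μ x : ℝ} (hμ : -1 < μ) (hx : 0 < x) :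
    HasDerivAt (besselJ μ) (μ / x * besselJ μ x - besselJ (μ + 1) x) x := by
  have hxt : x ∈ Set.Ioo (x / 2) (2 * x) := ⟨by linarith, by linarith⟩
  have htsum := hasDerivAt_tsum_of_isPreconnected
    ((summable_succ_mul_pow_div_factorial_mul_Gamma hμ (sq_nonneg x)).mul_left _) isOpen_Ioo
    isPreconnected_Ioo
    (fun k y hy => hasDerivAt_besselJTerm μ k (by linarith [hy.1] : 0 < y))
    (fun k y hy => norm_deriv_besselJTerm_le hμ hx hy k) hxt (summable_besselJTerm hμ hx) hxt
  refine htsum.congr_deriv ?_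
  have hshift : Summable fun k : ℕ => 2 * (k + 1 : ℕ) / x * besselJTerm μ (k + 1) x := by
    simpa only [besselJTerm_succ hμ _ hx] using (summable_besselJTerm (by linarith) hx).neg
  have hsplit : ∀ k : ℕ, (2 * k + μ) / x * besselJTerm μ k x =
      μ / x * besselJTerm μ k x + 2 * (k : ℝ) / x * besselJTerm μ k x := fun k => by ring
  have hsummable : Summable fun k : ℕ => 2 * (k : ℝ) / x * besselJTerm μ k x :=
    (summable_nat_add_iff 1).mp hshift
  rw [tsum_congr hsplit, ((summable_besselJTerm hμ hx).mul_left _).tsum_add hsummable,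
    tsum_mul_left, hsummable.tsum_eq_zero_add]
  simp only [besselJTerm_succ hμ _ hx, tsum_neg, ← besselJ_eq_tsum]
  simp [sub_eq_add_neg]

lemma hasDerivAt_rpow_mul_besselJ {μ y : ℝ} (hμ : -1 < μ) (s : ℝ) (hy : 0 < y) :
    HasDerivAt (fun z => z ^ s * besselJ μ z)
      ((s + μ) * y ^ (s - 1) * besselJ μ y - y ^ s * besselJ (μ + 1) y) y := by
  refine ((hasDerivAt_rpow_const (Or.inl hy.ne')).mul (hasDerivAt_besselJ hμ hy)).congr_deriv ?_
  rw [rpow_sub_one hy.ne']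
  field_simp
  ring

noncomputable def besselCoeff (α : ℝ) : ℕ → ℕ → ℝ
  | 0, m => if m = 0 then 1 else 0
  | i + 1, m =>
    (2 * m + α - i) * besselCoeff α i m - if m = 0 then 0 else besselCoeff α i (m - 1)

lemma besselCoeff_eq_zero_of_lt (α : ℝ) {i m : ℕ} (h : i < m) : besselCoeff α i m = 0 := by
  induction i generalizing m with
  | zero => simp [besselCoeff, h.ne']
  | succ i ih => simp [besselCoeff, ih (by omega : i < m), ih (by omega : i < m - 1)]

lemma besselCoeff_self (α : ℝ) (i : ℕ) : besselCoeff α i i = (-1) ^ i := by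
  induction i with
  | zero => simp [besselCoeff]
  | succ i ih =>
    simp [besselCoeff, besselCoeff_eq_zero_of_lt α (Nat.lt_succ_self i), ih, pow_succ]

lemma iteratedDeriv_besselJ {α : ℝ} (hα : -1 < α) (i : ℕ) {y : ℝ} (hy : 0 < y) :
    iteratedDeriv i (besselJ α) y =
      ∑ m ∈ range (i + 1), besselCoeff α i m * (y ^ ((m : ℝ) - i) * besselJ (α + m) y) := by
  induction i generalizing y with
  | zero => simp [besselCoeff]
  | succ i ih =>
    have hderiv := HasDerivAt.fun_sum (u := range (i + 1)) fun m _ =>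
      (hasDerivAt_rpow_mul_besselJ (μ := α + m) (by linarith [m.cast_nonneg (α := ℝ)])
        ((m : ℝ) - i) hy).const_mul (besselCoeff α i m)
    rw [iteratedDeriv_succ, (hderiv.congr_of_eventuallyEq
      (Filter.eventuallyEq_of_mem (Ioi_mem_nhds hy) fun z hz => ih hz)).deriv]
    set g : ℕ → ℝ := fun m =>
      (2 * m + α - i) * besselCoeff α i m * (y ^ ((m : ℝ) - i - 1) * besselJ (α + m) y)
    set h : ℕ → ℝ := fun m =>
      besselCoeff α i m * (y ^ ((m : ℝ) - i) * besselJ (α + m + 1) y)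
    have hg : g (i + 1) = 0 := by simp [g, besselCoeff_eq_zero_of_lt α (Nat.lt_succ_self i)]
    calc _ = ∑ m ∈ range (i + 1), (g m - h m) :=
          sum_congr rfl fun m _ => by simp only [g, h]; ring
      _ = ∑ m ∈ range (i + 1 + 1), g m - ∑ m ∈ range (i + 1), h m := by
        rw [sum_sub_distrib, sum_range_succ g (i + 1), hg, add_zero]
      _ = ∑ m ∈ range (i + 1), (g (m + 1) - h m) + g 0 := by
        rw [sum_range_succ', sum_sub_distrib]; ring
      _ = _ := by
        rw [sum_range_succ' _ (i + 1)]
        congr 1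
        · refine sum_congr rfl fun m _ => ?_
          simp only [g, h, besselCoeff, if_neg (Nat.succ_ne_zero _), Nat.add_sub_cancel]
          push_cast
          ring_nf
        · simp only [g, besselCoeff, ↓reduceIte, Nat.cast_zero, Nat.cast_add_one]
          ring_nf

theorem stmt_14_general (α : ℝ) (hα : -1 < α) (N : ℕ) (c : ℝ) (hc : 0 < c)
    (v : ℕ → ℝ) (hvmono : StrictMono v) (hvpos : ∀ n, 0 < v n) (u : ℕ → ℝ)
    (hsum : ∀ k : ℕ, ∀ i < N,
      (Summable fun n : ℕ =>
        v n ^ k * |u n| * |iteratedDeriv i (besselJ α) (c * v n)|) ∧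
      (Summable fun n : ℕ =>
        v n ^ k * |u n| * |besselJ (α + i) (c * v n)|)) :
    (Matrix.of fun i j : Fin N =>
        ∑' n : ℕ, (-1 : ℝ) ^ (i : ℕ) *
          v n ^ (((i : ℕ) : ℝ) + 2 * ((j : ℕ) : ℝ) + α) *
          iteratedDeriv (i : ℕ) (besselJ α) (c * v n) * u n).det
      = (Matrix.of fun i j : Fin N =>
          ∑' n : ℕ, v n ^ (((i : ℕ) : ℝ) + 2 * ((j : ℕ) : ℝ) + α) *
            besselJ (α + (i : ℕ)) (c * v n) * u n).det := by
  refine Matrix.det_of_eq_sum_range_mul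
    (A := fun i j => ∑' n, (-1 : ℝ) ^ i * v n ^ ((i : ℝ) + 2 * j + α) *
      iteratedDeriv i (besselJ α) (c * v n) * u n)
    (B := fun m j => ∑' n, v n ^ ((m : ℝ) + 2 * j + α) * besselJ (α + m) (c * v n) * u n)
    (L := fun i m => (-1) ^ i * besselCoeff α i m * c ^ ((m : ℝ) - i))
    (fun i => by simp [besselCoeff_self, ← mul_pow]) fun i hi j _ => ?_
  have hsummable : ∀ m ∈ range (i + 1), Summable fun n =>
      v n ^ ((m : ℝ) + 2 * j + α) * besselJ (α + m) (c * v n) * u n := fun m hm => by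
    have hmN : m < N := by rw [mem_range] at hm; omega
    simpa only [mul_assoc] using summable_rpow_mul_of_summable_pow_mul (hvpos 0)
      (fun n => hvmono.monotone n.zero_le)
      (by linarith [m.cast_nonneg (α := ℝ), j.cast_nonneg (α := ℝ)])
      fun k => (hsum k m hmN).2.congr fun n => by rw [abs_mul]; ring
  simp_rw [← tsum_mul_left]
  rw [← Summable.tsum_finsetSum fun m hm => (hsummable m hm).mul_left _]
  refine tsum_congr fun n => ?_
  rw [iteratedDeriv_besselJ hα i (mul_pos hc (hvpos n)), mul_sum, sum_mul]
  refine sum_congr rfl fun m _ => ?_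
  have hpow : v n ^ ((m : ℝ) + 2 * j + α) =
      v n ^ ((i : ℝ) + 2 * j + α) * v n ^ ((m : ℝ) - i) := by
    rw [← rpow_add (hvpos n)]; ring_nf
  rw [mul_rpow hc.le (hvpos n).le, hpow]
  ring

theorem stmt_14 (α : ℝ) (hα : -1 < α) (N : ℕ) (hN : 1 ≤ N) (c : ℝ) (hc : 0 < c)
    (v : ℕ → ℝ) (hvmono : StrictMono v) (hvpos : ∀ n, 0 < v n) (u : ℕ → ℝ)
    (hsum : ∀ k : ℕ, ∀ i < N,
      (Summable fun n : ℕ =>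
        v n ^ k * |u n| * |iteratedDeriv i (besselJ α) (c * v n)|) ∧
      (Summable fun n : ℕ =>
        v n ^ k * |u n| * |besselJ (α + i) (c * v n)|)) :
    (Matrix.of fun i j : Fin N =>
        ∑' n : ℕ, (-1 : ℝ) ^ (i : ℕ) *
          v n ^ (((i : ℕ) : ℝ) + 2 * ((j : ℕ) : ℝ) + α) *
          iteratedDeriv (i : ℕ) (besselJ α) (c * v n) * u n).det
      = (Matrix.of fun i j : Fin N =>
          ∑' n : ℕ, v n ^ (((i : ℕ) : ℝ) + 2 * ((j : ℕ) : ℝ) + α) *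
            besselJ (α + (i : ℕ)) (c * v n) * u n).det :=
  stmt_14_general α hα N c hc v hvmono hvpos u hsum
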